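/- arXiv:2504.06931 — 6 statements merged into one kernel-verified Lean document; each statement's English description precedes it below -/
import Mathlib

section
/- For every metric space X and every continuous function f : X → ℝ, the set L^∞(f) = {x ∈ X : Lip f(x) = ∞} is a Gδ-set in X. -/
open Filter Metric Set Topology

/-- `Lip^r f(x) = (1/r) · sup_{u ∈ B(x,r)} |f(x) − f(u)|`, with the convention
`sup ∅ = 0`, computed in `[0,∞]`. -/
noncomputable def lipR {X : Type*} [MetricSpace X] (f : X → ℝ) (x : X) (r : ℝ) : ENNReal :=
  (⨆ u ∈ Metric.ball x r, ENNReal.ofReal |f x - f u|) / ENNReal.ofReal r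

/-- The big Lipschitz derivative `Lip f(x) = limsup_{r→0⁺} Lip^r f(x)`. -/
noncomputable def bigLip {X : Type*} [MetricSpace X] (f : X → ℝ) (x : X) : ENNReal :=
  Filter.limsup (lipR f x) (𝓝[>] (0 : ℝ))

lemma lipR_gt_iff {X : Type*} [MetricSpace X] (f : X → ℝ) (x : X) {r : ℝ} (hr : 0 < r)
    (n : ℕ) : (n : ENNReal) < lipR f x r ↔ ∃ u, dist u x < r ∧ (n : ℝ) * r < |f x - f u| := by
  unfold lipR
  rw [ENNReal.lt_div_iff_mul_lt (Or.inl (ENNReal.ofReal_pos.mpr hr).ne')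
      (Or.inl ENNReal.ofReal_ne_top)]
  · have : (n : ENNReal) * ENNReal.ofReal r = ENNReal.ofReal ((n : ℝ) * r) := by
      rw [ENNReal.ofReal_mul (by positivity), ENNReal.ofReal_natCast]
    rw [this, lt_iSup_iff]
    constructor
    · rintro ⟨u, hu⟩
      rw [lt_iSup_iff] at hu
      obtain ⟨hmem, hlt⟩ := hu
      refine ⟨u, mem_ball.mp hmem, ?_⟩
      exact (ENNReal.ofReal_lt_ofReal_iff_of_nonneg (by positivity)).mp hlt
    · rintro ⟨u, hd, hlt⟩
      refine ⟨u, ?_⟩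
      rw [lt_iSup_iff]
      exact ⟨mem_ball.mpr hd, (ENNReal.ofReal_lt_ofReal_iff_of_nonneg (by positivity)).mpr hlt⟩

/-- For every metric space `X` and every continuous `f : X → ℝ`, the set
`L^∞(f) = {x : Lip f(x) = ∞}` is a `Gδ`-set in `X`. -/
theorem isGδ_bigLip_eq_top {X : Type*} [MetricSpace X] (f : X → ℝ) (hf : Continuous f) :
    IsGδ {x : X | bigLip f x = ⊤} := by
  have key : {x : X | bigLip f x = ⊤} =
      ⋂ (n : ℕ) (k : ℕ), ⋃ (r ∈ Ioo (0:ℝ) (1/(k+1))) (u : X),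
        {x : X | dist u x < r ∧ (n : ℝ) * r < |f x - f u|} := by
    ext x
    simp only [mem_setOf_eq, mem_iInter, mem_iUnion, mem_Ioo, mem_setOf_eq]
    constructor
    · intro h n k
      have hlt : (n : ENNReal) < bigLip f x := h ▸ ENNReal.natCast_lt_top n
      have hfreq := Filter.frequently_lt_of_lt_limsup (by isBoundedDefault) hlt
      have hmem : Ioo (0:ℝ) (1/(k+1)) ∈ 𝓝[>] (0:ℝ) :=
        Ioo_mem_nhdsGT_of_mem ⟨le_refl _, by positivity⟩
      obtain ⟨r, hr, hrI⟩ := (hfreq.and_eventually (eventually_mem_set.mpr hmem)).exists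
      obtain ⟨u, hu⟩ := (lipR_gt_iff f x hrI.1 n).mp hr
      exact ⟨r, hrI, u, hu⟩
    · intro h
      by_contra hne
      obtain ⟨n, hn⟩ := ENNReal.exists_nat_gt hne
      have hev : ∀ᶠ r in 𝓝[>] (0:ℝ), lipR f x r < n :=
        Filter.eventually_lt_of_limsup_lt hn
      obtain ⟨s, hs, hsub⟩ := hev.exists_mem
      obtain ⟨δ, hδ0, hδ⟩ := mem_nhdsGT_iff_exists_Ioo_subset.mp hs
      obtain ⟨k, hk⟩ := exists_nat_gt (1/δ)
      have hk1 : (1:ℝ)/(k+1) < δ := by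
        rw [div_lt_iff₀ (by positivity)]
        rw [div_lt_iff₀ hδ0] at hk
        nlinarith
      obtain ⟨r, hrI, u, hd, hlt⟩ := h n k
      have hrs : r ∈ s := hδ ⟨hrI.1, hrI.2.trans hk1⟩
      have := (lipR_gt_iff f x hrI.1 n).mpr ⟨u, hd, hlt⟩
      exact absurd (hsub r hrs) (not_lt.mpr this.le)
  rw [key]
  refine .iInter fun n => .iInter fun k => IsOpen.isGδ ?_
  refine isOpen_iUnion fun r => isOpen_iUnion fun hr => isOpen_iUnion fun u => ?_
  exact (isOpen_lt (continuous_const.dist continuous_id) continuous_const).inter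
    (isOpen_lt continuous_const (hf.sub continuous_const).abs)
end

section
/- For every metric space X and every continuous function f : X → ℝ, the set ℓ^∞(f) = {x ∈ X : lip f(x) = ∞} is an F_{σδ}-set in X, i.e., it is a countable intersection of countable unions of closed subsets of X. -/
open Filter Metric Set Topology

/-- The little Lipschitz derivative `lip f(x) = liminf_{r→0⁺} Lip^r f(x)`. -/
noncomputable def litLip {X : Type*} [MetricSpace X] (f : X → ℝ) (x : X) : ENNReal :=
  Filter.liminf (lipR f x) (𝓝[>] (0 : ℝ))

/-!
Write `ℓ^∞(f) = ⋂ₙ ⋃ₘ {x | n ≤ Lip^r f(x) for all r < 1/(m+1)}`; it remains to see that these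
sets are closed (although `{x | n ≤ Lip^r f(x)}` for a single `r` need not be). If `x` is a limit
of such points, pick one, `y`, with `d(x, y) < ε` and `|f x - f y| < ε`. Then
`B(y, r - ε) ⊆ B(x, r)`, so the oscillation of `f` around `y` on `B(y, r - ε)`, which is at least
`n (r - ε)`, exceeds that around `x` on `B(x, r)` by at most `ε`. Let `ε → 0`.
-/

open scoped ENNReal

theorem ENNReal.liminf_eq_top_iff_forall_natCast_le {α : Type*} {l : Filter α} {g : α → ℝ≥0∞} :
    liminf g l = ⊤ ↔ ∀ n : ℕ, ∀ᶠ a in l, (n : ℝ≥0∞) ≤ g a := by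
  refine ⟨fun h n ↦ ?_, fun h ↦ ?_⟩
  · exact (eventually_lt_of_lt_liminf (h ▸ ENNReal.natCast_lt_top n)).mono fun _ ↦ le_of_lt
  · by_contra hne
    obtain ⟨n, hn⟩ := ENNReal.exists_nat_gt hne
    exact (le_liminf_of_le (by isBoundedDefault) (h n)).not_gt hn

theorem nhdsGT_zero_hasBasis_Ioo_one_div :
    (𝓝[>] (0 : ℝ)).HasBasis (fun _ : ℕ ↦ True) (fun m ↦ Ioo 0 (1 / (m + 1))) :=
  (nhdsGT_basis 0).to_hasBasis
    (fun _ hε ↦ let ⟨m, hm⟩ := exists_nat_one_div_lt hε; ⟨m, trivial, Ioo_subset_Ioo_right hm.le⟩)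
    (fun _ _ ↦ ⟨_, Nat.one_div_pos_of_nat, subset_rfl⟩)

section Oscillation

variable {X : Type*} [MetricSpace X]

noncomputable def oscBall (f : X → ℝ) (x : X) (r : ℝ) : ℝ≥0∞ :=
  ⨆ u ∈ ball x r, ENNReal.ofReal |f x - f u|

theorem le_lipR_iff {f : X → ℝ} {x : X} {r : ℝ} (hr : 0 < r) {c : ℝ≥0∞} :
    c ≤ lipR f x r ↔ c * ENNReal.ofReal r ≤ oscBall f x r :=
  ENNReal.le_div_iff_mul_le (Or.inl (ENNReal.ofReal_pos.2 hr).ne') (Or.inl ENNReal.ofReal_ne_top)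

theorem oscBall_le_oscBall_add {f : X → ℝ} {x y : X} {r δ : ℝ} (hxy : dist y x ≤ δ) :
    oscBall f y r ≤ oscBall f x (r + δ) + ENNReal.ofReal |f y - f x| := by
  refine iSup₂_le fun u hu ↦ ?_
  have hux : u ∈ ball x (r + δ) := by
    rw [mem_ball] at hu ⊢
    linarith [dist_triangle u y x]
  calc ENNReal.ofReal |f y - f u|
      ≤ ENNReal.ofReal (|f x - f u| + |f y - f x|) :=
        ENNReal.ofReal_le_ofReal (by linarith [abs_sub_le (f y) (f x) (f u)])
    _ ≤ ENNReal.ofReal |f x - f u| + ENNReal.ofReal |f y - f x| := ENNReal.ofReal_add_le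
    _ ≤ oscBall f x (r + δ) + ENNReal.ofReal |f y - f x| := by
        gcongr
        exact le_iSup₂ (f := fun u _ ↦ ENNReal.ofReal |f x - f u|) u hux

theorem isClosed_setOf_forall_le_lipR {f : X → ℝ} (hf : Continuous f) {c : ℝ≥0∞} (hc : c ≠ ⊤)
    (a : ℝ) : IsClosed {x | ∀ r ∈ Ioo 0 a, c ≤ lipR f x r} := by
  refine isClosed_of_closure_subset fun x hx r ⟨hr0, hra⟩ ↦ (le_lipR_iff hr0).2 ?_
  have hnear : ∀ ε ∈ Ioo 0 r,
      c * ENNReal.ofReal (r - ε) ≤ oscBall f x r + ENNReal.ofReal ε := by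
    rintro ε ⟨hε0, hεr⟩
    obtain ⟨y, ⟨hyx, hfy⟩, hy⟩ := mem_closure_iff_nhds.mp hx _
      (inter_mem (ball_mem_nhds x hε0) (hf.continuousAt (ball_mem_nhds (f x) hε0)))
    have hsub : r - ε ∈ Ioo 0 a := ⟨by linarith, by linarith⟩
    calc c * ENNReal.ofReal (r - ε)
        ≤ oscBall f y (r - ε) := (le_lipR_iff hsub.1).1 (hy _ hsub)
      _ ≤ oscBall f x (r - ε + ε) + ENNReal.ofReal |f y - f x| :=
          oscBall_le_oscBall_add (le_of_lt hyx)
      _ ≤ oscBall f x r + ENNReal.ofReal ε := by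
          rw [sub_add_cancel]
          gcongr
          exact le_of_lt hfy
  have hid : Tendsto (fun ε : ℝ ↦ ε) (𝓝[>] 0) (𝓝 0) := tendsto_nhdsWithin_of_tendsto_nhds tendsto_id
  have hlhs : Tendsto (fun ε ↦ c * ENNReal.ofReal (r - ε)) (𝓝[>] 0) (𝓝 (c * ENNReal.ofReal r)) := by
    simpa using
      ENNReal.Tendsto.const_mul (ENNReal.tendsto_ofReal (tendsto_const_nhds.sub hid)) (Or.inr hc)
  have hrhs : Tendsto (fun ε ↦ oscBall f x r + ENNReal.ofReal ε) (𝓝[>] 0) (𝓝 (oscBall f x r)) := by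
    simpa using tendsto_const_nhds.add (ENNReal.tendsto_ofReal hid)
  exact le_of_tendsto_of_tendsto hlhs hrhs (eventually_of_mem (Ioo_mem_nhdsGT hr0) hnear)

end Oscillation

theorem litLip_eq_top_iff {X : Type*} [MetricSpace X] {f : X → ℝ} {x : X} :
    litLip f x = ⊤ ↔
      ∀ n : ℕ, ∃ m : ℕ, ∀ r ∈ Ioo (0 : ℝ) (1 / (m + 1)), (n : ℝ≥0∞) ≤ lipR f x r := by
  simp only [litLip, ENNReal.liminf_eq_top_iff_forall_natCast_le,
    nhdsGT_zero_hasBasis_Ioo_one_div.eventually_iff, true_and]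

/-- For every metric space `X` and every continuous `f : X → ℝ`, the set
`ℓ^∞(f) = {x : lip f(x) = ∞}` is an `F_{σδ}`-set in `X`, i.e. a countable
intersection of countable unions of closed sets. -/
theorem litLip_eq_top_FSigmaDelta {X : Type*} [MetricSpace X] (f : X → ℝ) (hf : Continuous f) :
    ∃ F : ℕ → ℕ → Set X, (∀ n m, IsClosed (F n m)) ∧
      {x : X | litLip f x = ⊤} = ⋂ n, ⋃ m, F n m := by
  refine ⟨fun n m ↦ {x | ∀ r ∈ Ioo (0 : ℝ) (1 / (m + 1)), (n : ℝ≥0∞) ≤ lipR f x r},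
    fun n m ↦ isClosed_setOf_forall_le_lipR hf (ENNReal.natCast_ne_top n) _, ?_⟩
  ext x
  simp only [mem_ofPred_eq, mem_iInter, mem_iUnion, litLip_eq_top_iff]
end

section
/- Let X be a metric space, A ⊆ X a closed set, a > 1 and c > 0 real numbers, and for each n ∈ ℕ let G_n = {x ∈ X : d(x,A) < c/aⁿ}. Then there exists a sequence (S_n)_{n∈ℕ} such that each S_n is a maximal (1/aⁿ)-separated subset of the subspace G_n and the sequence of sets T_n = (X \ G_n) ∪ S_n is ascending, i.e., T_n ⊆ T_{n+1} for all n. -/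
open Metric Set

/-- A set `S` in a metric space is `ε`-separated if any two distinct points of
`S` are at distance at least `ε`. -/
def IsEpsSeparated {X : Type*} [MetricSpace X] (ε : ℝ) (S : Set X) : Prop :=
  ∀ s ∈ S, ∀ t ∈ S, s ≠ t → ε ≤ dist s t

/-- `S` is a maximal `ε`-separated subset of `Y`: `S ⊆ Y`, `S` is `ε`-separated,
and any `ε`-separated set `T` with `S ⊆ T ⊆ Y` equals `S`. -/
def IsMaxEpsSeparatedIn {X : Type*} [MetricSpace X] (ε : ℝ) (Y S : Set X) : Prop :=
  S ⊆ Y ∧ IsEpsSeparated ε S ∧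
    ∀ T : Set X, T ⊆ Y → IsEpsSeparated ε T → S ⊆ T → T = S

lemma exists_max_eps_sep {X : Type*} [MetricSpace X] (ε : ℝ) (Y S₀ : Set X)
    (h₀ : S₀ ⊆ Y) (hsep : IsEpsSeparated ε S₀) :
    ∃ S, S₀ ⊆ S ∧ IsMaxEpsSeparatedIn ε Y S := by
  obtain ⟨m, hm, hmax⟩ := zorn_subset_nonempty {T : Set X | T ⊆ Y ∧ IsEpsSeparated ε T}
    (fun c hc hchain _ => ⟨⋃₀ c, ⟨sUnion_subset fun s hs => (hc hs).1,
      fun s hs t ht hst => by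
        obtain ⟨u, hu, hsu⟩ := hs
        obtain ⟨v, hv, htv⟩ := ht
        rcases hchain.total hu hv with h | h
        · exact (hc hv).2 s (h hsu) t htv hst
        · exact (hc hu).2 s hsu t (h htv) hst⟩,
      fun s hs => subset_sUnion_of_mem hs⟩) S₀ ⟨h₀, hsep⟩
  exact ⟨m, hm, hmax.prop.1, hmax.prop.2,
    fun T hTY hTsep hmT => subset_antisymm (hmax.le_of_ge ⟨hTY, hTsep⟩ hmT) hmT⟩

/-- Let `A ⊆ X` be closed, `a > 1`, `c > 0`, and `G_n = {x : d(x,A) < c/aⁿ}`.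
Then one can choose maximal `(1/aⁿ)`-separated subsets `S_n` of `G_n` so that
the sequence `T_n = (X \ G_n) ∪ S_n` is ascending. -/
theorem exists_ascending_TW_sets {X : Type*} [MetricSpace X] (A : Set X) (hA : IsClosed A)
    (a c : ℝ) (ha : 1 < a) (hc : 0 < c) :
    ∃ S : ℕ → Set X,
      (∀ n : ℕ, IsMaxEpsSeparatedIn (1 / a ^ n) {x : X | Metric.infDist x A < c / a ^ n} (S n)) ∧
      ∀ n : ℕ,
        ({x : X | Metric.infDist x A < c / a ^ n}ᶜ ∪ S n) ⊆
          ({x : X | Metric.infDist x A < c / a ^ (n + 1)}ᶜ ∪ S (n + 1)) := by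
  set G : ℕ → Set X := fun n => {x : X | Metric.infDist x A < c / a ^ n} with hG
  have hpow : ∀ n : ℕ, (0:ℝ) < a ^ n := fun n => pow_pos (lt_trans one_pos ha) n
  have hsub : ∀ n : ℕ, G (n + 1) ⊆ G n := by
    intro n x hx
    have h1 : c / a ^ (n+1) ≤ c / a ^ n :=
      div_le_div_of_nonneg_left hc.le (hpow n) (pow_le_pow_right₀ (le_of_lt ha) (Nat.le_succ n))
    exact lt_of_lt_of_le hx h1
  have heps : ∀ n : ℕ, (1:ℝ) / a ^ (n+1) ≤ 1 / a ^ n := fun n =>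
    div_le_div_of_nonneg_left one_pos.le (hpow n) (pow_le_pow_right₀ (le_of_lt ha) (Nat.le_succ n))
  -- recursive construction
  let F : ∀ n : ℕ, {S : Set X // IsMaxEpsSeparatedIn (1 / a ^ n) (G n) S} := fun n =>
    Nat.rec
      ⟨(exists_max_eps_sep (1 / a ^ 0) (G 0) ∅ (empty_subset _)
          (fun s hs => absurd hs (notMem_empty s))).choose,
        (exists_max_eps_sep (1 / a ^ 0) (G 0) ∅ (empty_subset _)
          (fun s hs => absurd hs (notMem_empty s))).choose_spec.2⟩
      (fun n ih =>
        ⟨(exists_max_eps_sep (1 / a ^ (n+1)) (G (n+1)) (ih.1 ∩ G (n+1))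
            (inter_subset_right)
            (fun s hs t ht hst =>
              le_trans (heps n) (ih.2.2.1 s hs.1 t ht.1 hst))).choose,
          (exists_max_eps_sep (1 / a ^ (n+1)) (G (n+1)) (ih.1 ∩ G (n+1))
            (inter_subset_right)
            (fun s hs t ht hst =>
              le_trans (heps n) (ih.2.2.1 s hs.1 t ht.1 hst))).choose_spec.2⟩) n
  have hstep : ∀ n : ℕ, (F n).1 ∩ G (n+1) ⊆ (F (n+1)).1 := fun n =>
    (exists_max_eps_sep (1 / a ^ (n+1)) (G (n+1)) ((F n).1 ∩ G (n+1))
            (inter_subset_right)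
            (fun s hs t ht hst =>
              le_trans (heps n) ((F n).2.2.1 s hs.1 t ht.1 hst))).choose_spec.1
  refine ⟨fun n => (F n).1, fun n => (F n).2, fun n x hx => ?_⟩
  rcases hx with hx | hx
  · exact Or.inl fun hx' => hx (hsub n hx')
  · by_cases hxG : x ∈ G (n+1)
    · exact Or.inr (hstep n ⟨hx, hxG⟩)
    · exact Or.inl hxG
end

section
/- Let X be a metric space, A ⊆ X closed, a > b ≥ 1 and c > 0 real numbers, and let f be a TW-function of type (a,b,c) centered at A. Then f : X → ℝ is continuous and satisfies 0 ≤ f(x) ≤ a/(a−b) for all x ∈ X. -/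
/-!
Every point of `G_n` lies within `1/aⁿ` of the maximal separated set `S_n` (otherwise it could be
added to `S_n`), and every point outside `G_n` lies in `T_n`; hence `d(x, T_n) ≤ 1/aⁿ` everywhere.
The `n`-th term of the series is therefore a continuous function bounded by `(b/a)ⁿ`, so the series
converges uniformly (Weierstrass M-test) to a continuous function bounded by `Σ (b/a)ⁿ = a/(a-b)`.
-/

open Metric Set Topology Filter

section Separated

variable {X : Type*} [MetricSpace X] {ε : ℝ} {S Y : Set X}

theorem IsEpsSeparated.insert {x : X} (hS : IsEpsSeparated ε S) (hx : ∀ s ∈ S, ε ≤ dist x s) :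
    IsEpsSeparated ε (insert x S) := by
  rintro u (rfl | hu) v (rfl | hv) huv
  · exact absurd rfl huv
  · exact hx v hv
  · exact dist_comm u v ▸ hx u hu
  · exact hS u hu v hv huv

theorem IsMaxEpsSeparatedIn.mem_or_exists_dist_lt (hS : IsMaxEpsSeparatedIn ε Y S) {x : X}
    (hx : x ∈ Y) : x ∈ S ∨ ∃ s ∈ S, dist x s < ε := by
  obtain ⟨hSY, hSsep, hmax⟩ := hS
  by_contra! h
  have hins : insert x S = S :=
    hmax _ (insert_subset hx hSY) (hSsep.insert h.2) (subset_insert x S)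
  exact h.1 (hins ▸ mem_insert x S)

theorem IsMaxEpsSeparatedIn.infDist_compl_union_le (hS : IsMaxEpsSeparatedIn ε Y S)
    (hε : 0 ≤ ε) (x : X) : infDist x (Yᶜ ∪ S) ≤ ε := by
  by_cases hx : x ∈ Y
  · rcases hS.mem_or_exists_dist_lt hx with hxS | ⟨s, hs, hxs⟩
    · exact (infDist_zero_of_mem (mem_union_right _ hxS)).trans_le hε
    · exact (infDist_le_dist_of_mem (mem_union_right _ hs)).trans hxs.le
  · exact (infDist_zero_of_mem (mem_union_left _ hx)).trans_le hε

end Separated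

section Geometric

variable {a b : ℝ}

theorem summable_geometric_div (hb : 0 ≤ b) (hab : b < a) : Summable fun n : ℕ => (b / a) ^ n :=
  summable_geometric_of_lt_one (div_nonneg hb (hb.trans hab.le))
    ((div_lt_one (hb.trans_lt hab)).mpr hab)

theorem tsum_geometric_div (hb : 0 ≤ b) (hab : b < a) :
    ∑' n : ℕ, (b / a) ^ n = a / (a - b) := by
  have ha : 0 < a := hb.trans_lt hab
  rw [tsum_geometric_of_lt_one (div_nonneg hb ha.le) ((div_lt_one ha).mpr hab)]
  field_simp

end Geometric

section WeightedDistanceSeries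

variable {X : Type*} [MetricSpace X] {a b : ℝ} {T : ℕ → Set X}

theorem norm_pow_mul_infDist_le (hb : 0 ≤ b) (hT : ∀ n x, infDist x (T n) ≤ 1 / a ^ n)
    (n : ℕ) (x : X) : ‖b ^ n * infDist x (T n)‖ ≤ (b / a) ^ n := by
  rw [Real.norm_of_nonneg (mul_nonneg (pow_nonneg hb n) infDist_nonneg), div_pow,
    div_eq_mul_one_div (b ^ n)]
  exact mul_le_mul_of_nonneg_left (hT n x) (pow_nonneg hb n)

theorem continuous_tsum_pow_mul_infDist (hb : 0 ≤ b) (hab : b < a)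
    (hT : ∀ n x, infDist x (T n) ≤ 1 / a ^ n) :
    Continuous fun x => ∑' n : ℕ, b ^ n * infDist x (T n) :=
  continuous_tsum (fun n => continuous_const.mul (continuous_infDist_pt (T n)))
    (summable_geometric_div hb hab) (norm_pow_mul_infDist_le hb hT)

theorem tsum_pow_mul_infDist_le (hb : 0 ≤ b) (hab : b < a)
    (hT : ∀ n x, infDist x (T n) ≤ 1 / a ^ n) (x : X) :
    ∑' n : ℕ, b ^ n * infDist x (T n) ≤ a / (a - b) := by
  have hgeom := summable_geometric_div hb hab
  have hterm n : b ^ n * infDist x (T n) ≤ (b / a) ^ n :=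
    (Real.le_norm_self _).trans (norm_pow_mul_infDist_le hb hT n x)
  calc ∑' n : ℕ, b ^ n * infDist x (T n)
      ≤ ∑' n : ℕ, (b / a) ^ n :=
        (hgeom.of_norm_bounded (norm_pow_mul_infDist_le hb hT · x)).tsum_le_tsum hterm hgeom
    _ = a / (a - b) := tsum_geometric_div hb hab

end WeightedDistanceSeries

theorem TW_continuous_and_bounded_general {X : Type*} [MetricSpace X]
    (a b : ℝ) (hab : b < a) (hb : 1 ≤ b)
    (G S T : ℕ → Set X)
    (hS : ∀ n, IsMaxEpsSeparatedIn (1 / a ^ n) (G n) (S n))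
    (hT : ∀ n, T n = (G n)ᶜ ∪ S n)
    (f : X → ℝ) (hf : ∀ x, f x = ∑' n : ℕ, b ^ n * Metric.infDist x (T n)) :
    Continuous f ∧ ∀ x : X, 0 ≤ f x ∧ f x ≤ a / (a - b) := by
  have hb0 : 0 ≤ b := zero_le_one.trans hb
  have ha : 0 < a := hb0.trans_lt hab
  have hdist n x : infDist x (T n) ≤ 1 / a ^ n :=
    hT n ▸ (hS n).infDist_compl_union_le (one_div_pos.mpr (pow_pos ha n)).le x
  refine ⟨funext hf ▸ continuous_tsum_pow_mul_infDist hb0 hab hdist, fun x => ⟨?_, ?_⟩⟩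
  · rw [hf x]
    exact tsum_nonneg fun n => mul_nonneg (pow_nonneg hb0 n) infDist_nonneg
  · rw [hf x]
    exact tsum_pow_mul_infDist_le hb0 hab hdist x

/-- A TW-function `f(x) = Σ_{n} bⁿ·d(x,T_n)` of type `(a,b,c)` centered at a
closed set `A` is continuous and satisfies `0 ≤ f(x) ≤ a/(a−b)`. -/
theorem TW_continuous_and_bounded {X : Type*} [MetricSpace X] (A : Set X) (hA : IsClosed A)
    (a b c : ℝ) (hab : b < a) (hb : 1 ≤ b) (hc : 0 < c)
    (G S T : ℕ → Set X)
    (hG : ∀ n, G n = {x : X | Metric.infDist x A < c / a ^ n})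
    (hS : ∀ n, IsMaxEpsSeparatedIn (1 / a ^ n) (G n) (S n))
    (hT : ∀ n, T n = (G n)ᶜ ∪ S n)
    (f : X → ℝ) (hf : ∀ x, f x = ∑' n : ℕ, b ^ n * Metric.infDist x (T n)) :
    Continuous f ∧ ∀ x : X, 0 ≤ f x ∧ f x ≤ a / (a - b) :=
  TW_continuous_and_bounded_general a b hab hb G S T hS hT f hf
end

section
/- Let X be a metric space, A ⊆ X closed, a > b ≥ 1 and c > 0 real numbers, and let f be a TW-function of type (a,b,c) centered at A with remainders r_n(x) = Σ_{k=n}^∞ b^k·d(x,T_k). Then for every n ∈ ℕ the function r_n : X → ℝ is continuous and satisfies 0 ≤ r_n(x) ≤ bⁿ/((a−b)·aⁿ⁻¹) for all x ∈ X; moreover r_n(x) = 0 for every x in the complement of G_n = {x : d(x,A) < c/aⁿ}, provided the sequence (T_k) is ascending. -/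
open Metric Set Topology Filter

/-- The remainders `r_n(x) = Σ_{k≥n} b^k·d(x,T_k)` of a TW-function of type
`(a,b,c)` centered at a closed set `A` are continuous and satisfy
`0 ≤ r_n(x) ≤ bⁿ/((a−b)·aⁿ⁻¹)`; moreover, if the sequence `(T_k)` is ascending,
then `r_n` vanishes outside `G_n`. -/
theorem TW_remainder_properties {X : Type*} [MetricSpace X] (A : Set X) (hA : IsClosed A)
    (a b c : ℝ) (hab : b < a) (hb : 1 ≤ b) (hc : 0 < c)
    (G S T : ℕ → Set X)
    (hG : ∀ n, G n = {x : X | Metric.infDist x A < c / a ^ n})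
    (hS : ∀ n, IsMaxEpsSeparatedIn (1 / a ^ n) (G n) (S n))
    (hT : ∀ n, T n = (G n)ᶜ ∪ S n)
    (r : ℕ → X → ℝ)
    (hr : ∀ n x, r n x = ∑' k : ℕ, b ^ (n + k) * Metric.infDist x (T (n + k))) :
    ∀ n : ℕ,
      Continuous (r n) ∧
      (∀ x : X, 0 ≤ r n x ∧ r n x ≤ b ^ n / ((a - b) * a ^ ((n : ℤ) - 1))) ∧
      ((∀ k : ℕ, T k ⊆ T (k + 1)) → ∀ x ∉ G n, r n x = 0) := by
  have ha1 : (1 : ℝ) < a := lt_of_le_of_lt hb hab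
  have ha0 : (0 : ℝ) < a := lt_trans one_pos ha1
  have hb0 : (0 : ℝ) < b := lt_of_lt_of_le one_pos hb
  have hba0 : (0 : ℝ) ≤ b / a := by positivity
  have hba1 : b / a < 1 := (div_lt_one ha0).mpr hab
  -- key distance bound
  have hdist : ∀ (k : ℕ) (x : X), Metric.infDist x (T k) ≤ 1 / a ^ k := by
    intro k x
    have hpow : (0 : ℝ) < a ^ k := pow_pos ha0 k
    by_cases hx : x ∈ T k
    · rw [Metric.infDist_zero_of_mem hx]; positivity
    · have hxG : x ∈ G k := by
        by_contra h
        exact hx ((hT k) ▸ Or.inl h)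
      have hxS : x ∉ S k := fun h => hx ((hT k) ▸ Or.inr h)
      obtain ⟨hSsub, hSsep, hSmax⟩ := hS k
      -- there is a point of S k within 1/a^k
      by_contra hcon
      push_neg at hcon
      have hall : ∀ s ∈ S k, 1 / a ^ k ≤ dist x s := by
        intro s hs
        calc 1 / a ^ k ≤ Metric.infDist x (T k) := le_of_lt hcon
        _ ≤ dist x s := Metric.infDist_le_dist_of_mem ((hT k) ▸ Or.inr hs)
      have hsep' : IsEpsSeparated (1 / a ^ k) (insert x (S k)) := by
        intro s hs t ht hst
        rcases hs with rfl | hs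
        · rcases ht with rfl | ht
          · exact absurd rfl hst
          · exact hall t ht
        · rcases ht with rfl | ht
          · rw [dist_comm]; exact hall s hs
          · exact hSsep s hs t ht hst
      have hsub' : insert x (S k) ⊆ G k := insert_subset hxG hSsub
      have := hSmax _ hsub' hsep' (subset_insert _ _)
      exact hxS (this ▸ mem_insert x (S k))
  -- summability of the majorant
  have hsum : Summable (fun k : ℕ => (b / a) ^ k) :=
    summable_geometric_of_lt_one hba0 hba1
  intro n
  have hmaj : Summable (fun k : ℕ => (b / a) ^ (n + k)) := by
    simpa [pow_add] using hsum.mul_left ((b / a) ^ n)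
  have hterm_nonneg : ∀ (x : X) (k : ℕ),
      0 ≤ b ^ (n + k) * Metric.infDist x (T (n + k)) := by
    intro x k
    exact mul_nonneg (pow_nonneg hb0.le _) Metric.infDist_nonneg
  have hterm_le : ∀ (x : X) (k : ℕ),
      b ^ (n + k) * Metric.infDist x (T (n + k)) ≤ (b / a) ^ (n + k) := by
    intro x k
    have h1 := hdist (n + k) x
    have : b ^ (n + k) * Metric.infDist x (T (n + k)) ≤ b ^ (n + k) * (1 / a ^ (n + k)) :=
      mul_le_mul_of_nonneg_left h1 (pow_nonneg hb0.le _)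
    calc b ^ (n + k) * Metric.infDist x (T (n + k)) ≤ b ^ (n + k) * (1 / a ^ (n + k)) := this
    _ = (b / a) ^ (n + k) := by rw [div_pow]; ring
  have hsummand : ∀ x : X,
      Summable (fun k : ℕ => b ^ (n + k) * Metric.infDist x (T (n + k))) := by
    intro x
    exact Summable.of_nonneg_of_le (hterm_nonneg x) (hterm_le x) hmaj
  refine ⟨?_, ?_, ?_⟩
  · -- continuity
    have : r n = fun x => ∑' k : ℕ, b ^ (n + k) * Metric.infDist x (T (n + k)) :=
      funext (hr n)
    rw [this]
    refine continuous_tsum (fun k => ?_) hmaj (fun k x => ?_)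
    · exact continuous_const.mul (Metric.continuous_infDist_pt _)
    · rw [Real.norm_of_nonneg (hterm_nonneg x k)]
      exact hterm_le x k
  · intro x
    constructor
    · rw [hr]
      exact tsum_nonneg (hterm_nonneg x)
    · have h1 : r n x ≤ ∑' k : ℕ, (b / a) ^ (n + k) := by
        rw [hr]
        exact Summable.tsum_le_tsum (hterm_le x) (hsummand x) hmaj
      have h2 : ∑' k : ℕ, (b / a) ^ (n + k) = (b / a) ^ n * (1 - b / a)⁻¹ := by
        simp only [pow_add]
        rw [tsum_mul_left, tsum_geometric_of_lt_one hba0 hba1]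
      have h3 : (b / a) ^ n * (1 - b / a)⁻¹ = b ^ n / ((a - b) * a ^ ((n : ℤ) - 1)) := by
        have hz : (a : ℝ) ^ ((n : ℤ) - 1) = a ^ n / a := by
          rw [zpow_sub₀ (ne_of_gt ha0), zpow_one, zpow_natCast]
        rw [hz, div_pow]
        have hab' : a - b ≠ 0 := sub_ne_zero.mpr (ne_of_gt hab)
        have han : (a : ℝ) ^ n ≠ 0 := ne_of_gt (pow_pos ha0 n)
        field_simp
      rw [← h3, ← h2]
      exact h1
  · intro hasc x hx
    have hmono : ∀ k : ℕ, T n ⊆ T (n + k) := by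
      intro k
      induction k with
      | zero => simp
      | succ m ih => exact ih.trans (hasc (n + m))
    have hxT : ∀ k : ℕ, x ∈ T (n + k) := fun k => hmono k ((hT n) ▸ Or.inl hx)
    rw [hr]
    have : ∀ k : ℕ, b ^ (n + k) * Metric.infDist x (T (n + k)) = 0 := by
      intro k
      rw [Metric.infDist_zero_of_mem (hxT k), mul_zero]
    simp [this]
end

section
/- Let X be a metric space and A ⊆ X. Then the following are equivalent: (i) A is a closed set containing no isolated points of X; (ii) there exists a continuous function f : X → ℝ such that 𝕃^∞(f) = L^∞(f) = A. -/
/-!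
Fix nested maximal `8⁻ⁿ`-separated subsets `Cₙ` of `A` and put
`f = ∑ₙ 4ⁿ min (dist(·, Cₙ), 8⁻ⁿ)`. Off the closed set `A` all but finitely many terms are
locally constant, so `f` is locally Lipschitz there and `𝕃ip f < ∞`. At `x ∈ A` and any `n`,
either `x ∈ Cₙ` and a nearby point `u` makes the `n`-th term grow like `4ⁿ d(u, x)`, or
`x ∉ Cₙ` and an almost nearest point of `Cₙ` does; the earlier terms are together
`4ⁿ/3`-Lipschitz, and the later ones only help because that point of `Cₙ` lies in every later
net. Hence `Lip f(x) = ∞`, and `Lip ≤ 𝕃ip` gives `𝕃ip f(x) = ∞`. Conversely, `𝕃ip f` is upper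
semicontinuous and vanishes at isolated points.
-/

open Metric Set Topology Filter

/-- The local Lipschitz derivative
`𝕃ip f(x) = limsup_{(u,v)→(x,x), u≠v} |f(u) − f(v)| / d(u,v)`. -/
noncomputable def locLip {X : Type*} [MetricSpace X] (f : X → ℝ) (x : X) : ENNReal :=
  Filter.limsup (fun p : X × X => ENNReal.ofReal (|f p.1 - f p.2| / dist p.1 p.2))
    (𝓝[{p : X × X | p.1 ≠ p.2}] (x, x))

open scoped NNReal ENNReal

theorem tendsto_pair_nhdsNE_offDiag {X : Type*} [TopologicalSpace X] (x : X) :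
    Tendsto (fun u => (x, u)) (𝓝[≠] x) (𝓝[{p : X × X | p.1 ≠ p.2}] (x, x)) :=
  tendsto_nhdsWithin_iff.2
    ⟨((continuous_const.prodMk continuous_id).tendsto x).mono_left nhdsWithin_le_nhds,
      eventually_nhdsWithin_of_forall fun _ hu => Ne.symm hu⟩

section LipschitzDerivatives

variable {X : Type*} [MetricSpace X] {f : X → ℝ} {x : X}

theorem ofReal_div_le_lipR {r : ℝ} {u : X} (hu : u ∈ ball x r) :
    ENNReal.ofReal (|f x - f u| / r) ≤ lipR f x r := by
  rw [ENNReal.ofReal_div_of_pos (pos_of_mem_ball hu), lipR]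
  gcongr
  exact le_biSup (fun v => ENNReal.ofReal |f x - f v|) hu

theorem bigLip_le_locLip (f : X → ℝ) (x : X) : bigLip f x ≤ locLip f x := by
  refine le_of_forall_gt_imp_ge_of_dense fun b hb => ?_
  obtain ⟨ε, hε, hball⟩ := mem_nhdsWithin_iff.1
    ((tendsto_pair_nhdsNE_offDiag x).eventually (eventually_lt_of_limsup_lt hb))
  refine limsup_le_of_le (by isBoundedDefault) ?_
  filter_upwards [Ioo_mem_nhdsGT hε] with r hr
  refine ENNReal.div_le_of_le_mul (iSup₂_le fun u hu => ?_)
  rcases eq_or_ne u x with rfl | hux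
  · simp
  have hd : 0 < dist x u := dist_pos.2 hux.symm
  have hq : ENNReal.ofReal (|f x - f u| / dist x u) < b :=
    hball ⟨ball_subset_ball hr.2.le hu, hux⟩
  calc ENNReal.ofReal |f x - f u|
      = ENNReal.ofReal (|f x - f u| / dist x u) * ENNReal.ofReal (dist x u) := by
        rw [← ENNReal.ofReal_mul (by positivity), div_mul_cancel₀ _ hd.ne']
    _ ≤ b * ENNReal.ofReal r := by gcongr; exact (mem_ball'.1 hu).le

theorem bigLip_eq_top_of_frequently
    (h : ∀ K : ℝ, ∃ᶠ u in 𝓝[≠] x, K * dist u x ≤ |f x - f u|) : bigLip f x = ⊤ := by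
  refine ENNReal.eq_top_of_forall_nnreal_le fun K => le_limsup_of_frequently_le ?_
  have hradius : Tendsto (fun u => 2 * dist u x) (𝓝[≠] x) (𝓝[>] 0) := by
    refine tendsto_nhdsWithin_iff.2 ⟨?_, eventually_nhdsWithin_of_forall fun u hu => ?_⟩
    · exact ((show Continuous fun u => 2 * dist u x by fun_prop).tendsto' x 0 (by simp)).mono_left
        nhdsWithin_le_nhds
    · exact mul_pos two_pos (dist_pos.2 hu)
  refine hradius.frequently ((h (2 * K)).mp (eventually_nhdsWithin_of_forall fun u hu hK => ?_))
  have hd : 0 < dist u x := dist_pos.2 hu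
  have hK' : 2 * K * dist u x / (2 * dist u x) = K := by field_simp
  calc (K : ℝ≥0∞) = ENNReal.ofReal (2 * K * dist u x / (2 * dist u x)) := by
        rw [hK', ENNReal.ofReal_coe_nnreal]
    _ ≤ ENNReal.ofReal (|f x - f u| / (2 * dist u x)) := by gcongr
    _ ≤ lipR f x (2 * dist u x) := ofReal_div_le_lipR (by rw [mem_ball]; linarith)

theorem locLip_le_of_lipschitzOnWith {K : ℝ≥0} {s : Set X} (hs : s ∈ 𝓝 x)
    (hf : LipschitzOnWith K f s) : locLip f x ≤ K := by
  refine limsup_le_of_le (by isBoundedDefault) ?_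
  filter_upwards [nhdsWithin_le_nhds (prod_mem_nhds hs hs), self_mem_nhdsWithin]
    with p hps hp
  rw [← ENNReal.ofReal_coe_nnreal]
  refine ENNReal.ofReal_le_ofReal ((div_le_iff₀ (dist_pos.2 hp)).2 ?_)
  simpa [Real.dist_eq] using hf.dist_le_mul _ hps.1 _ hps.2

theorem upperSemicontinuous_locLip (f : X → ℝ) : UpperSemicontinuous (locLip f) := by
  intro x b hb
  obtain ⟨c, hxc, hcb⟩ := exists_between hb
  have h : ∀ᶠ p in 𝓝 (x, x),
      p.1 ≠ p.2 → ENNReal.ofReal (|f p.1 - f p.2| / dist p.1 p.2) < c :=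
    eventually_nhdsWithin_iff.1 (eventually_lt_of_limsup_lt hxc)
  have hdiag : Tendsto (fun y : X => (y, y)) (𝓝 x) (𝓝 (x, x)) :=
    (continuous_id.prodMk continuous_id).tendsto x
  filter_upwards [hdiag.eventually (eventually_eventually_nhds.2 h)] with y hy
  refine (limsup_le_of_le (by isBoundedDefault) ?_).trans_lt hcb
  exact eventually_nhdsWithin_iff.2 (hy.mono fun _ hp hne => (hp hne).le)

theorem isClosed_setOf_locLip_eq_top (f : X → ℝ) : IsClosed {x | locLip f x = ⊤} := by
  have := (upperSemicontinuous_locLip f).isClosed_preimage ⊤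
  rwa [Ici_top] at this

theorem locLip_eq_zero_of_isOpen_singleton (f : X → ℝ) (hx : IsOpen ({x} : Set X)) :
    locLip f x = 0 := by
  have : 𝓝[{p : X × X | p.1 ≠ p.2}] (x, x) = ⊥ := by
    rw [← empty_mem_iff_bot, mem_nhdsWithin]
    refine ⟨{x} ×ˢ {x}, hx.prod hx, ⟨rfl, rfl⟩, ?_⟩
    rintro ⟨a, b⟩ ⟨⟨ha, hb⟩, hab⟩
    exact hab (ha.trans hb.symm)
  rw [locLip, this, limsup_bot, bot_eq_zero]

end LipschitzDerivatives

section Nets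

variable {X : Type*} [PseudoEMetricSpace X]

theorem exists_isSeparated_isCover_superset {A B : Set X} {ε : ℝ≥0} (hBA : B ⊆ A)
    (hB : IsSeparated ε B) : ∃ C, B ⊆ C ∧ C ⊆ A ∧ IsSeparated ε C ∧ IsCover ε A C := by
  obtain ⟨C, hBC, hmax⟩ := zorn_subset_nonempty {N | N ⊆ A ∧ IsSeparated ε N}
    (fun c hc hchain _ => ⟨⋃₀ c,
      ⟨sUnion_subset fun N hN => (hc hN).1,
        (pairwise_sUnion hchain.directedOn).2 fun N hN => (hc hN).2⟩,
      fun _ => subset_sUnion_of_mem⟩) B ⟨hBA, hB⟩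
  exact ⟨C, hBC, hmax.prop.1, hmax.prop.2, .of_maximal_isSeparated hmax⟩

structure IsNestedNetSeq (A : Set X) (ε : ℕ → ℝ≥0) (C : ℕ → Set X) : Prop where
  mono : Monotone C
  subset : ∀ n, C n ⊆ A
  isSeparated : ∀ n, IsSeparated (ε n) (C n)
  isCover : ∀ n, IsCover (ε n) A (C n)

theorem exists_isNestedNetSeq (A : Set X) {ε : ℕ → ℝ≥0} (hε : Antitone ε) :
    ∃ C, IsNestedNetSeq A ε C := by
  choose! F hF using fun n (B : Set X) (hB : B ⊆ A ∧ IsSeparated (ε n) B) =>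
    exists_isSeparated_isCover_superset hB.1 hB.2
  let C : ℕ → Set X := fun n => Nat.rec (F 0 ∅) (fun n Cn => F (n + 1) Cn) n
  have h0 := hF 0 ∅ ⟨empty_subset A, .empty⟩
  have hnext (n : ℕ) (h : C n ⊆ A ∧ IsSeparated (ε n) (C n)) :=
    hF (n + 1) (C n) ⟨h.1, h.2.anti (by exact_mod_cast hε n.le_succ)⟩
  have hinv : ∀ n, C n ⊆ A ∧ IsSeparated (ε n) (C n) := by
    intro n
    induction n with
    | zero => exact ⟨h0.2.1, h0.2.2.1⟩
    | succ n ih => exact ⟨(hnext n ih).2.1, (hnext n ih).2.2.1⟩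
  refine ⟨C, monotone_nat_of_le_succ fun n => (hnext n (hinv n)).1, fun n => (hinv n).1,
    fun n => (hinv n).2, fun n => ?_⟩
  cases n
  exacts [h0.2.2.2, (hnext _ (hinv _)).2.2.2]

end Nets

section SeparatedSets

variable {X : Type*} [PseudoMetricSpace X]

theorem lt_dist_of_isSeparated {ε : ℝ≥0} {S : Set X} (hS : IsSeparated ε S) {x y : X}
    (hx : x ∈ S) (hy : y ∈ S) (hxy : x ≠ y) : (ε : ℝ) < dist x y := by
  have : (ε : ℝ≥0∞) < edist x y := hS hx hy hxy
  rwa [edist_nndist, ENNReal.coe_lt_coe, ← NNReal.coe_lt_coe, coe_nndist] at this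

theorem exists_mem_dist_le_two_mul_infDist {S : Set X} (hS : IsClosed S) (hne : S.Nonempty)
    {x : X} (hx : x ∉ S) : ∃ e ∈ S, dist x e ≤ 2 * infDist x S := by
  have hpos : 0 < infDist x S := (hS.notMem_iff_infDist_pos hne).1 hx
  obtain ⟨e, he, hxe⟩ := (infDist_lt_iff hne).1 (show infDist x S < 2 * infDist x S by linarith)
  exact ⟨e, he, hxe.le⟩

theorem exists_dist_le_infDist_of_isSeparated {ε : ℝ≥0} (hε : 0 < ε) {S : Set X}
    (hS : IsSeparated ε S) {x : X} (hx : x ∈ S) [(𝓝[≠] x).NeBot] :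
    ∃ u ≠ x, dist u x ≤ ε ∧ dist u x ≤ infDist u S := by
  obtain ⟨u, hux, hu⟩ := Filter.nonempty_of_mem (inter_mem self_mem_nhdsWithin
    (nhdsWithin_le_nhds (ball_mem_nhds x (half_pos (NNReal.coe_pos.2 hε)))) : {x}ᶜ ∩ _ ∈ 𝓝[≠] x)
  rw [mem_ball] at hu
  refine ⟨u, hux, by linarith, (le_infDist ⟨x, hx⟩).2 fun c hc => ?_⟩
  rcases eq_or_ne c x with rfl | hcx
  · exact le_rfl
  have := lt_dist_of_isSeparated hS hx hc hcx.symm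
  linarith [dist_triangle_left x c u]

end SeparatedSets

theorem isClosed_of_isSeparated {X : Type*} [MetricSpace X] {ε : ℝ≥0} (hε : 0 < ε) {S : Set X}
    (hS : IsSeparated ε S) : IsClosed S :=
  isClosed_of_pairwise_le_dist hε fun _ ha _ hb hab => (lt_dist_of_isSeparated hS ha hb hab).le

section NetFunction

variable {X : Type*} [PseudoMetricSpace X]

noncomputable def netScale (n : ℕ) : ℝ≥0 := 8⁻¹ ^ n

theorem netScale_pos (n : ℕ) : 0 < netScale n := pow_pos (by norm_num) n

theorem antitone_netScale : Antitone netScale :=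
  fun _ _ h => pow_le_pow_of_le_one zero_le (inv_le_one_of_one_le₀ (by norm_num)) h

theorem four_pow_mul_netScale (n : ℕ) : (4 : ℝ) ^ n * netScale n = 2⁻¹ ^ n := by
  rw [netScale]; push_cast; rw [← mul_pow]; norm_num

theorem summable_four_pow_mul_netScale : Summable fun n => (4 : ℝ) ^ n * netScale n := by
  simpa only [four_pow_mul_netScale] using summable_geometric_of_lt_one (by norm_num) (by norm_num)

variable (C : ℕ → Set X)

noncomputable def netBump (n : ℕ) (y : X) : ℝ := min (infDist y (C n)) (netScale n)

noncomputable def netFun (y : X) : ℝ := ∑' n, 4 ^ n * netBump C n y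

theorem netBump_nonneg (n : ℕ) (y : X) : 0 ≤ netBump C n y :=
  le_min infDist_nonneg (netScale n).2

theorem netBump_le (n : ℕ) (y : X) : netBump C n y ≤ netScale n := min_le_right _ _

theorem lipschitzWith_netBump (n : ℕ) : LipschitzWith 1 (netBump C n) :=
  (lipschitz_infDist_pt _).min_const _

theorem netBump_eq_zero_of_mem {n : ℕ} {y : X} (hy : y ∈ C n) : netBump C n y = 0 := by
  rw [netBump, infDist_zero_of_mem hy]
  exact min_eq_left (netScale n).2

theorem summable_netBump (y : X) : Summable fun n => 4 ^ n * netBump C n y := by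
  refine summable_four_pow_mul_netScale.of_norm_bounded fun n => ?_
  rw [Real.norm_eq_abs, abs_of_nonneg (by have := netBump_nonneg C n y; positivity)]
  gcongr
  exact netBump_le C n y

theorem summable_netBump_sub (u v : X) :
    Summable fun n => 4 ^ n * (netBump C n u - netBump C n v) := by
  simpa only [mul_sub] using (summable_netBump C u).sub (summable_netBump C v)

theorem netFun_sub (u v : X) :
    netFun C u - netFun C v = ∑' n, 4 ^ n * (netBump C n u - netBump C n v) := by
  simp only [netFun, mul_sub]
  exact ((summable_netBump C u).tsum_sub (summable_netBump C v)).symm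

theorem continuous_netFun : Continuous (netFun C) := by
  refine continuous_tsum (fun n => continuous_const.mul (lipschitzWith_netBump C n).continuous)
    summable_four_pow_mul_netScale fun n y => ?_
  rw [Real.norm_eq_abs, abs_of_nonneg (by have := netBump_nonneg C n y; positivity)]
  gcongr
  exact netBump_le C n y

theorem sum_four_pow_le (N : ℕ) : ∑ n ∈ Finset.range N, (4 : ℝ) ^ n ≤ 4 ^ N / 3 := by
  rw [geom_sum_eq (by norm_num)]
  linarith [one_le_pow₀ (M₀ := ℝ) (a := 4) (n := N) (by norm_num)]

theorem le_netFun_sub (hC : Monotone C) {N : ℕ} {q : X} (hq : q ∈ C N) (p : X) :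
    4 ^ N * (netBump C N p - dist p q / 3) ≤ netFun C p - netFun C q := by
  set g := fun n => (4 : ℝ) ^ n * (netBump C n p - netBump C n q)
  have hhead : ∀ n ∈ Finset.range N, -(4 ^ n * dist p q) ≤ g n := fun n _ => by
    have := (lipschitzWith_netBump C n).dist_le_mul p q
    rw [NNReal.coe_one, one_mul, Real.dist_eq] at this
    have := neg_le_of_abs_le this
    simp only [g]; nlinarith [pow_pos (four_pos (α := ℝ)) n]
  have htail : ∀ n ∉ Finset.range (N + 1), 0 ≤ g n := fun n hn => by
    have hn : N ≤ n := by simp at hn; omega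
    simp only [g, netBump_eq_zero_of_mem C (hC hn hq), sub_zero]
    exact mul_nonneg (by positivity) (netBump_nonneg C n p)
  calc 4 ^ N * (netBump C N p - dist p q / 3)
      ≤ -((∑ n ∈ Finset.range N, (4 : ℝ) ^ n) * dist p q) + g N := by
        have := sum_four_pow_le N
        simp only [g, netBump_eq_zero_of_mem C hq, sub_zero]
        nlinarith [dist_nonneg (x := p) (y := q)]
    _ ≤ ∑ n ∈ Finset.range N, g n + g N := by
        rw [Finset.sum_mul, ← Finset.sum_neg_distrib]
        gcongr with n hn
        exact hhead n hn
    _ = ∑ n ∈ Finset.range (N + 1), g n := (Finset.sum_range_succ g N).symm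
    _ ≤ ∑' n, g n := (summable_netBump_sub C p q).sum_le_tsum _ htail
    _ = netFun C p - netFun C q := (netFun_sub C p q).symm

end NetFunction

section Construction

variable {X : Type*} [MetricSpace X] {A : Set X} {C : ℕ → Set X}

theorem exists_mul_dist_le_abs_netFun_sub (hC : IsNestedNetSeq A netScale C) {x : X} (hx : x ∈ A)
    [(𝓝[≠] x).NeBot] (N : ℕ) :
    ∃ u ≠ x, dist u x ≤ 2 * netScale N ∧ 4 ^ N / 6 * dist u x ≤ |netFun C x - netFun C u| := by
  have h4 : (0 : ℝ) < 4 ^ N := by positivity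
  by_cases hxC : x ∈ C N
  · obtain ⟨u, hux, hdist, hinf⟩ :=
      exists_dist_le_infDist_of_isSeparated (netScale_pos N) (hC.isSeparated N) hxC
    have hbump : dist u x ≤ netBump C N u := le_min hinf hdist
    have hgap := le_netFun_sub C hC.mono hxC u
    refine ⟨u, hux, by linarith [dist_nonneg (x := u) (y := x)], ?_⟩
    rw [abs_sub_comm]
    refine le_trans ?_ (hgap.trans (le_abs_self _))
    nlinarith [dist_nonneg (x := u) (y := x)]
  · obtain ⟨c, hc, hxc⟩ := mem_iUnion₂.1 (isCover_iff_subset_iUnion_closedBall.1 (hC.isCover N) hx)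
    have hcover : infDist x (C N) ≤ netScale N := (infDist_le_dist_of_mem hc).trans hxc
    obtain ⟨e, he, hxe⟩ := exists_mem_dist_le_two_mul_infDist
      (isClosed_of_isSeparated (netScale_pos N) (hC.isSeparated N)) ⟨c, hc⟩ hxC
    have hbump : dist x e ≤ 2 * netBump C N x := by rwa [netBump, min_eq_left hcover]
    have hgap := le_netFun_sub C hC.mono he x
    refine ⟨e, fun h => hxC (h ▸ he), by rw [dist_comm]; linarith, ?_⟩
    rw [dist_comm]
    refine le_trans ?_ (hgap.trans (le_abs_self _))
    nlinarith [dist_nonneg (x := x) (y := e)]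

theorem frequently_mul_dist_le_abs_netFun_sub (hC : IsNestedNetSeq A netScale C) {x : X}
    (hx : x ∈ A) [(𝓝[≠] x).NeBot] (K : ℝ) :
    ∃ᶠ u in 𝓝[≠] x, K * dist u x ≤ |netFun C x - netFun C u| := by
  rw [frequently_iff]
  intro U hU
  obtain ⟨ε, hε, hsub⟩ := mem_nhdsWithin_iff.1 hU
  have hsmall : ∀ᶠ N in atTop, 2 * (netScale N : ℝ) < ε := by
    have : Tendsto (fun N => 2 * (netScale N : ℝ)) atTop (𝓝 0) := by
      simpa [netScale] using (tendsto_pow_atTop_nhds_zero_of_lt_one (r := (8 : ℝ)⁻¹)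
        (by norm_num) (by norm_num)).const_mul 2
    exact this.eventually (gt_mem_nhds hε)
  have hlarge : ∀ᶠ N in atTop, K ≤ (4 : ℝ) ^ N / 6 :=
    ((tendsto_pow_atTop_atTop_of_one_lt (by norm_num : (1 : ℝ) < 4)).atTop_div_const
      (by norm_num)).eventually_ge_atTop K
  obtain ⟨N, hNs, hNl⟩ := (hsmall.and hlarge).exists
  obtain ⟨u, hux, hd, hsteep⟩ := exists_mul_dist_le_abs_netFun_sub hC hx N
  exact ⟨u, hsub ⟨mem_ball.2 (hd.trans_lt hNs), hux⟩,
    (mul_le_mul_of_nonneg_right hNl dist_nonneg).trans hsteep⟩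

variable (C) in
theorem exists_lipschitzOnWith_netFun (hA : IsClosed A) (hCA : ∀ n, C n ⊆ A) {x : X}
    (hx : x ∉ A) : ∃ K, ∃ s ∈ 𝓝 x, LipschitzOnWith K (netFun C) s := by
  obtain ⟨δ, hδ, hball⟩ := Metric.isOpen_iff.1 hA.isOpen_compl x hx
  obtain ⟨N, hN⟩ := ((tendsto_pow_atTop_nhds_zero_of_lt_one (r := (8 : ℝ)⁻¹) (by norm_num)
    (by norm_num)).eventually (gt_mem_nhds (half_pos hδ))).exists_forall_of_atTop
  have hconst : ∀ n ≥ N, ∀ u ∈ ball x (δ / 2), ∀ v ∈ ball x (δ / 2),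
      netBump C n u = netBump C n v := by
    intro n hn
    rcases (C n).eq_empty_or_nonempty with h | h
    · simp [netBump, h]
    have hfar : ∀ y ∈ ball x (δ / 2), netBump C n y = netScale n := fun y hy => by
      refine min_eq_right ((le_infDist h).2 fun c hc => ?_)
      have hcx : δ ≤ dist c x := not_lt.1 fun h' => hball h' (hCA n hc)
      have : (netScale n : ℝ) < δ / 2 := by simpa [netScale] using hN n hn
      linarith [mem_ball.1 hy, dist_triangle c y x, dist_comm y c]
    intro u hu v hv
    rw [hfar u hu, hfar v hv]
  refine ⟨∑ n ∈ Finset.range N, 4 ^ n, ball x (δ / 2), ball_mem_nhds x (half_pos hδ),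
    LipschitzOnWith.of_dist_le_mul fun u hu v hv => ?_⟩
  rw [Real.dist_eq, netFun_sub, tsum_eq_sum (s := Finset.range N) fun n hn => by
    rw [hconst n (by simpa using hn) u hu v hv, sub_self, mul_zero]]
  push_cast
  refine (Finset.abs_sum_le_sum_abs _ _).trans ?_
  rw [Finset.sum_mul]
  gcongr with n
  rw [abs_mul, abs_of_pos (by positivity)]
  gcongr
  simpa [Real.dist_eq] using (lipschitzWith_netBump C n).dist_le_mul u v

end Construction

/-- For a metric space `X` and `A ⊆ X`, the following are equivalent:
(i) `A` is closed and contains no isolated points of `X`;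
(ii) there is a continuous `f : X → ℝ` with `𝕃^∞(f) = L^∞(f) = A`. -/
theorem closed_no_isolated_iff_exists_bigLip_locLip {X : Type*} [MetricSpace X] (A : Set X) :
    (IsClosed A ∧ ∀ x ∈ A, ¬ IsOpen ({x} : Set X)) ↔
      ∃ f : X → ℝ, Continuous f ∧
        {x : X | locLip f x = ⊤} = A ∧ {x : X | bigLip f x = ⊤} = A := by
  constructor
  · rintro ⟨hA, hperfect⟩
    obtain ⟨C, hC⟩ := exists_isNestedNetSeq A antitone_netScale
    have hmem : ∀ x ∈ A, bigLip (netFun C) x = ⊤ := fun x hx =>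
      haveI : (𝓝[≠] x).NeBot :=
        neBot_iff.2 (mt (isOpen_singleton_iff_punctured_nhds x).2 (hperfect x hx))
      bigLip_eq_top_of_frequently (frequently_mul_dist_le_abs_netFun_sub hC hx)
    have hnot : ∀ x ∉ A, locLip (netFun C) x ≠ ⊤ := fun x hx =>
      let ⟨_, _, hs, hK⟩ := exists_lipschitzOnWith_netFun C hA hC.subset hx
      ne_top_of_le_ne_top ENNReal.coe_ne_top (locLip_le_of_lipschitzOnWith hs hK)
    refine ⟨netFun C, continuous_netFun C, Set.ext fun x => ⟨fun h => ?_, fun hx => ?_⟩,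
      Set.ext fun x => ⟨fun h => ?_, hmem x⟩⟩
    · exact by_contra fun hx => hnot x hx h
    · exact top_unique ((hmem x hx).ge.trans (bigLip_le_locLip _ x))
    · exact by_contra fun hx => hnot x hx (top_unique (h.ge.trans (bigLip_le_locLip _ x)))
  · rintro ⟨f, -, rfl, -⟩
    refine ⟨isClosed_setOf_locLip_eq_top f, fun x hx hopen => ?_⟩
    simp [locLip_eq_zero_of_isOpen_singleton f hopen] at hx
end
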